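/- Two-term functional relation for lower characteristic (1,0): for all real a, c and all complex u, v, θ[a,c;1,0](u,v) · θ[a,c;0,0](u,v) = Θ[a,c;1,0](2u,2v) · Θ[0,0;1,0](0,0) + Θ[a,c+1;1,0](2u,2v) · Θ[0,1;1,0](0,0). -/

import Mathlib

/-!
With `s = m + a/2`, `s' = m' + a/2` the first coordinates of the two summation indices,
`σ = (s + s') / 2` and `δ = (s - s') / 2` satisfy `s ^ 2 + s' ^ 2 = 2 (σ ^ 2 + δ ^ 2)`,
and similarly in the second coordinate. Hence a product of two theta series with the same moduli is a sum of four
products of theta series with doubled moduli, one for each parity class of `(m + m', n + n')`.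
For lower characteristics `(1, 0)` and `(0, 0)`, the classes with `m + m'` odd carry the factor
`Θ[1, e; 1, 0](0, 0)`, an odd theta constant, which vanishes; the two remaining classes are the
two terms of the relation.
-/

open Complex

/-- Genus-two theta function with real characteristics `a c b d`
(upper characteristics `a, c`, lower characteristics `b, d`),
moduli `τ₁ τ₂ τ₁₂` and complex arguments `x y`. -/
noncomputable def theta (τ₁ τ₂ τ₁₂ : ℂ) (a c b d : ℝ) (x y : ℂ) : ℂ :=
  ∑' p : ℤ × ℤ,
    Complex.exp
      ((Real.pi : ℂ) * Complex.I *
          (τ₁ * ((p.1 : ℂ) + (a : ℂ) / 2) ^ 2 + τ₂ * ((p.2 : ℂ) + (c : ℂ) / 2) ^ 2 +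
            2 * τ₁₂ * ((p.1 : ℂ) + (a : ℂ) / 2) * ((p.2 : ℂ) + (c : ℂ) / 2)) +
        2 * (Real.pi : ℂ) * Complex.I *
          (((p.1 : ℂ) + (a : ℂ) / 2) * (x + (b : ℂ) / 2) +
            ((p.2 : ℂ) + (c : ℂ) / 2) * (y + (d : ℂ) / 2)))

/-- The same theta function with doubled moduli `2τ₁, 2τ₂, 2τ₁₂`. -/
noncomputable def Theta2 (τ₁ τ₂ τ₁₂ : ℂ) (a c b d : ℝ) (x y : ℂ) : ℂ :=
  theta (2 * τ₁) (2 * τ₂) (2 * τ₁₂) a c b d x y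

open Real

noncomputable def thetaTerm (τ₁ τ₂ τ₁₂ : ℂ) (a c b d : ℝ) (x y : ℂ) (p : ℤ × ℤ) : ℂ :=
  Complex.exp
    ((Real.pi : ℂ) * Complex.I *
        (τ₁ * ((p.1 : ℂ) + (a : ℂ) / 2) ^ 2 + τ₂ * ((p.2 : ℂ) + (c : ℂ) / 2) ^ 2 +
          2 * τ₁₂ * ((p.1 : ℂ) + (a : ℂ) / 2) * ((p.2 : ℂ) + (c : ℂ) / 2)) +
      2 * (Real.pi : ℂ) * Complex.I *
        (((p.1 : ℂ) + (a : ℂ) / 2) * (x + (b : ℂ) / 2) +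
          ((p.2 : ℂ) + (c : ℂ) / 2) * (y + (d : ℂ) / 2)))

lemma theta_eq_tsum (τ₁ τ₂ τ₁₂ : ℂ) (a c b d : ℝ) (x y : ℂ) :
    theta τ₁ τ₂ τ₁₂ a c b d x y = ∑' p : ℤ × ℤ, thetaTerm τ₁ τ₂ τ₁₂ a c b d x y p := rfl

section QuadraticForm

variable {y₁ y₂ y₁₂ : ℝ}

lemma exists_pos_mul_sq_add_sq_le (h₁ : 0 < y₁) (h : y₁₂ ^ 2 < y₁ * y₂) :
    ∃ κ > 0, ∀ s t : ℝ, κ * (s ^ 2 + t ^ 2) ≤ y₁ * s ^ 2 + y₂ * t ^ 2 + 2 * y₁₂ * s * t := by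
  have h₂ : 0 < y₂ := pos_of_mul_pos_right (by nlinarith) h₁.le
  refine ⟨(y₁ * y₂ - y₁₂ ^ 2) / (y₁ + y₂), div_pos (by linarith) (by linarith), fun s t => ?_⟩
  rw [div_mul_eq_mul_div, div_le_iff₀ (by linarith)]
  nlinarith [sq_nonneg (y₁ * s + y₁₂ * t), sq_nonneg (y₂ * t + y₁₂ * s)]

lemma neg_mul_sq_add_mul_abs_le {κ : ℝ} (hκ : 0 < κ) (B s : ℝ) :
    -(κ * s ^ 2) + B * |s| ≤ B ^ 2 / (4 * κ) := by
  rw [le_div_iff₀ (by positivity), ← sq_abs s]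
  nlinarith [sq_nonneg (2 * κ * |s| - B)]

lemma exists_abs_add_abs_sub_le_quadratic (h₁ : 0 < y₁) (h : y₁₂ ^ 2 < y₁ * y₂) (α β : ℝ) :
    ∃ C : ℝ, ∀ s t : ℝ,
      |s| + |t| - C ≤ y₁ * s ^ 2 + y₂ * t ^ 2 + 2 * y₁₂ * s * t + (s * α + t * β) := by
  obtain ⟨κ, hκ, hQ⟩ := exists_pos_mul_sq_add_sq_le h₁ h
  refine ⟨(|α| + 1) ^ 2 / (4 * κ) + (|β| + 1) ^ 2 / (4 * κ), fun s t => ?_⟩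
  have hs := neg_mul_sq_add_mul_abs_le hκ (|α| + 1) s
  have ht := neg_mul_sq_add_mul_abs_le hκ (|β| + 1) t
  have hsα : -(s * α) ≤ |s| * |α| := abs_mul s α ▸ neg_le_abs _
  have htβ : -(t * β) ≤ |t| * |β| := abs_mul t β ▸ neg_le_abs _
  nlinarith [hQ s t]

end QuadraticForm

lemma summable_exp_neg_abs_int : Summable fun n : ℤ => Real.exp (-|(n : ℝ)|) :=
  .of_nat_of_neg (by simpa using Real.summable_exp_neg_nat)
    (by simpa using Real.summable_exp_neg_nat)

lemma norm_thetaTerm (τ₁ τ₂ τ₁₂ : ℂ) (a c b d : ℝ) (x y : ℂ) (p : ℤ × ℤ) :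
    ‖thetaTerm τ₁ τ₂ τ₁₂ a c b d x y p‖ =
      let s : ℝ := p.1 + a / 2
      let t : ℝ := p.2 + c / 2
      Real.exp (-(π * τ₁.im * s ^ 2 + π * τ₂.im * t ^ 2 + 2 * (π * τ₁₂.im) * s * t +
        (s * (2 * π * x.im) + t * (2 * π * y.im)))) := by
  have hs : (p.1 : ℂ) + (a : ℂ) / 2 = ((p.1 + a / 2 : ℝ) : ℂ) := by push_cast; ring
  have ht : (p.2 : ℂ) + (c : ℂ) / 2 = ((p.2 + c / 2 : ℝ) : ℂ) := by push_cast; ring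
  rw [thetaTerm, Complex.norm_exp, hs, ht]
  congr 1
  simp only [add_re, mul_re, mul_im, add_im, ofReal_re, ofReal_im, I_re, I_im, div_re, div_im,
    pow_two, re_ofNat, im_ofNat]
  ring

lemma summable_norm_thetaTerm {τ₁ τ₂ τ₁₂ : ℂ} (h₁ : 0 < τ₁.im) (h : τ₁₂.im ^ 2 < τ₁.im * τ₂.im)
    (a c b d : ℝ) (x y : ℂ) :
    Summable fun p : ℤ × ℤ => ‖thetaTerm τ₁ τ₂ τ₁₂ a c b d x y p‖ := by
  obtain ⟨C, hC⟩ := exists_abs_add_abs_sub_le_quadratic (y₁ := π * τ₁.im) (y₂ := π * τ₂.im)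
    (y₁₂ := π * τ₁₂.im) (by positivity)
    (by nlinarith [mul_pos (mul_pos pi_pos pi_pos) (sub_pos.2 h)]) (2 * π * x.im) (2 * π * y.im)
  have hmaj : Summable fun p : ℤ × ℤ =>
      Real.exp (C + |a| / 2 + |c| / 2) * (Real.exp (-|(p.1 : ℝ)|) * Real.exp (-|(p.2 : ℝ)|)) :=
    (summable_exp_neg_abs_int.mul_of_nonneg summable_exp_neg_abs_int
      (fun _ => (Real.exp_pos _).le) (fun _ => (Real.exp_pos _).le)).mul_left _
  refine hmaj.of_nonneg_of_le (fun _ => norm_nonneg _) fun p => ?_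
  rw [norm_thetaTerm, ← Real.exp_add, ← Real.exp_add, Real.exp_le_exp]
  have hs := abs_add_le (p.1 + a / 2 : ℝ) (-(a / 2))
  have ht := abs_add_le (p.2 + c / 2 : ℝ) (-(c / 2))
  simp only [add_neg_cancel_right, abs_neg, abs_div, abs_two] at hs ht
  linarith [hC (p.1 + a / 2) (p.2 + c / 2)]

/-- Every pair of integers is `(k + j + e, k - j)` for exactly one parity `e` of their sum. -/
def parityEquiv : (Fin 2 × Fin 2) × (ℤ × ℤ) × (ℤ × ℤ) ≃ (ℤ × ℤ) × (ℤ × ℤ) where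
  toFun q := ((q.2.1.1 + q.2.2.1 + q.1.1.val, q.2.1.2 + q.2.2.2 + q.1.2.val),
    (q.2.1.1 - q.2.2.1, q.2.1.2 - q.2.2.2))
  invFun p :=
    ((⟨((p.1.1 + p.2.1) % 2).toNat, by omega⟩, ⟨((p.1.2 + p.2.2) % 2).toNat, by omega⟩),
      ((p.1.1 + p.2.1) / 2, (p.1.2 + p.2.2) / 2),
      ((p.1.1 + p.2.1) / 2 - p.2.1, (p.1.2 + p.2.2) / 2 - p.2.2))
  left_inv := by
    rintro ⟨⟨e₁, e₂⟩, ⟨k, l⟩, ⟨j, i⟩⟩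
    simp only [Prod.mk.injEq, Fin.ext_iff]
    omega
  right_inv := by
    rintro ⟨⟨m, n⟩, ⟨m', n'⟩⟩
    simp only [Prod.mk.injEq]
    omega

section ProductFormula

variable {τ₁ τ₂ τ₁₂ : ℂ}

lemma thetaTerm_mul_thetaTerm_parityEquiv (a c b d a' c' b' d' : ℝ) (x y x' y' : ℂ)
    (q : (Fin 2 × Fin 2) × (ℤ × ℤ) × (ℤ × ℤ)) :
    thetaTerm τ₁ τ₂ τ₁₂ a c b d x y (parityEquiv q).1 *
        thetaTerm τ₁ τ₂ τ₁₂ a' c' b' d' x' y' (parityEquiv q).2 =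
      thetaTerm (2 * τ₁) (2 * τ₂) (2 * τ₁₂) ((a + a') / 2 + q.1.1.val) ((c + c') / 2 + q.1.2.val)
          (b + b') (d + d') (x + x') (y + y') q.2.1 *
        thetaTerm (2 * τ₁) (2 * τ₂) (2 * τ₁₂) ((a - a') / 2 + q.1.1.val)
          ((c - c') / 2 + q.1.2.val) (b - b') (d - d') (x - x') (y - y') q.2.2 := by
  simp only [thetaTerm, parityEquiv, Equiv.coe_fn_mk, ← Complex.exp_add]
  congr 1
  push_cast
  ring

variable (h₁ : 0 < τ₁.im) (h : τ₁₂.im ^ 2 < τ₁.im * τ₂.im)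
include h₁ h

lemma theta_mul_theta_eq_tsum (a c b d a' c' b' d' : ℝ) (x y x' y' : ℂ) :
    theta τ₁ τ₂ τ₁₂ a c b d x y * theta τ₁ τ₂ τ₁₂ a' c' b' d' x' y' =
      ∑' p : (ℤ × ℤ) × (ℤ × ℤ),
        thetaTerm τ₁ τ₂ τ₁₂ a c b d x y p.1 * thetaTerm τ₁ τ₂ τ₁₂ a' c' b' d' x' y' p.2 :=
  tsum_mul_tsum_of_summable_norm (summable_norm_thetaTerm h₁ h ..) (summable_norm_thetaTerm h₁ h ..)

lemma summable_thetaTerm_mul_thetaTerm (a c b d a' c' b' d' : ℝ) (x y x' y' : ℂ) :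
    Summable fun p : (ℤ × ℤ) × (ℤ × ℤ) =>
      thetaTerm τ₁ τ₂ τ₁₂ a c b d x y p.1 * thetaTerm τ₁ τ₂ τ₁₂ a' c' b' d' x' y' p.2 :=
  summable_mul_of_summable_norm (summable_norm_thetaTerm h₁ h ..) (summable_norm_thetaTerm h₁ h ..)

theorem theta_mul_theta (a c b d a' c' b' d' : ℝ) (x y x' y' : ℂ) :
    theta τ₁ τ₂ τ₁₂ a c b d x y * theta τ₁ τ₂ τ₁₂ a' c' b' d' x' y' =
      ∑ e : Fin 2 × Fin 2,
        Theta2 τ₁ τ₂ τ₁₂ ((a + a') / 2 + e.1.val) ((c + c') / 2 + e.2.val) (b + b') (d + d')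
            (x + x') (y + y') *
          Theta2 τ₁ τ₂ τ₁₂ ((a - a') / 2 + e.1.val) ((c - c') / 2 + e.2.val) (b - b') (d - d')
            (x - x') (y - y') := by
  have h₁' : 0 < (2 * τ₁).im := by simpa using h₁
  have h' : (2 * τ₁₂).im ^ 2 < (2 * τ₁).im * (2 * τ₂).im := by
    simp only [mul_im, re_ofNat, im_ofNat, zero_mul, add_zero]
    nlinarith
  have hsum := parityEquiv.summable_iff.mpr
    (summable_thetaTerm_mul_thetaTerm h₁ h a c b d a' c' b' d' x y x' y')
  rw [Function.comp_def] at hsum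
  rw [theta_mul_theta_eq_tsum h₁ h, ← parityEquiv.tsum_eq, hsum.tsum_prod, tsum_fintype]
  refine Finset.sum_congr rfl fun e _ => ?_
  rw [Theta2, Theta2, theta_mul_theta_eq_tsum h₁' h']
  exact tsum_congr fun r => thetaTerm_mul_thetaTerm_parityEquiv _ _ _ _ _ _ _ _ _ _ _ _ (e, r)

end ProductFormula

/-- The characteristic `[1, n; 1, 0]` is odd: `p ↦ (-1 - p.1, -n - p.2)` negates `p.1 + 1/2`
and `p.2 + n/2`, fixes the quadratic part and flips the sign of `exp (π i (p.1 + 1/2))`. -/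
lemma theta_one_int_one_zero_zero_zero (τ₁ τ₂ τ₁₂ : ℂ) (n : ℤ) :
    theta τ₁ τ₂ τ₁₂ 1 n 1 0 0 0 = 0 := by
  let σ : Equiv.Perm (ℤ × ℤ) :=
    Function.Involutive.toPerm (fun p => (-1 - p.1, -n - p.2)) fun p => by simp
  have hσ : ∀ p, thetaTerm τ₁ τ₂ τ₁₂ 1 n 1 0 0 0 (σ p) = -thetaTerm τ₁ τ₂ τ₁₂ 1 n 1 0 0 0 p := by
    intro p
    rw [show σ p = (-1 - p.1, -n - p.2) from rfl, thetaTerm, thetaTerm,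
      ← Complex.exp_add_pi_mul_I, Complex.exp_eq_exp_iff_exists_int]
    exact ⟨-p.1 - 1, by push_cast; ring⟩
  have hsum := σ.tsum_eq (thetaTerm τ₁ τ₂ τ₁₂ 1 n 1 0 0 0)
  rw [tsum_congr hσ, tsum_neg] at hsum
  exact neg_eq_self.mp hsum

theorem two_term_relation_10_general (τ₁ τ₂ τ₁₂ : ℂ)
    (hτ₁ : 0 < τ₁.im) (hτ : τ₁₂.im ^ 2 < τ₁.im * τ₂.im)
    (a c : ℝ) (u v : ℂ) :
    theta τ₁ τ₂ τ₁₂ a c 1 0 u v * theta τ₁ τ₂ τ₁₂ a c 0 0 u v =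
      Theta2 τ₁ τ₂ τ₁₂ a c 1 0 (2 * u) (2 * v) * Theta2 τ₁ τ₂ τ₁₂ 0 0 1 0 0 0 +
        Theta2 τ₁ τ₂ τ₁₂ a (c + 1) 1 0 (2 * u) (2 * v) * Theta2 τ₁ τ₂ τ₁₂ 0 1 1 0 0 0 := by
  have hodd₀ : Theta2 τ₁ τ₂ τ₁₂ 1 0 1 0 0 0 = 0 := by
    simpa [Theta2] using theta_one_int_one_zero_zero_zero (2 * τ₁) (2 * τ₂) (2 * τ₁₂) 0
  have hodd₁ : Theta2 τ₁ τ₂ τ₁₂ 1 1 1 0 0 0 = 0 := by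
    simpa [Theta2] using theta_one_int_one_zero_zero_zero (2 * τ₁) (2 * τ₂) (2 * τ₁₂) 1
  rw [theta_mul_theta hτ₁ hτ]
  simp only [Fintype.sum_prod_type, Fin.sum_univ_two, Fin.val_zero, Fin.val_one, Nat.cast_zero,
    Nat.cast_one, add_self_div_two, sub_self, zero_div, add_zero, sub_zero, zero_add, hodd₀,
    hodd₁, mul_zero]
  rw [← two_mul u, ← two_mul v]

theorem two_term_relation_10 (τ₁ τ₂ τ₁₂ : ℂ)
    (hτ₁ : 0 < τ₁.im) (hτ₂ : 0 < τ₂.im) (hτ : τ₁₂.im ^ 2 < τ₁.im * τ₂.im)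
    (a c : ℝ) (u v : ℂ) :
    theta τ₁ τ₂ τ₁₂ a c 1 0 u v * theta τ₁ τ₂ τ₁₂ a c 0 0 u v =
      Theta2 τ₁ τ₂ τ₁₂ a c 1 0 (2 * u) (2 * v) * Theta2 τ₁ τ₂ τ₁₂ 0 0 1 0 0 0 +
        Theta2 τ₁ τ₂ τ₁₂ a (c + 1) 1 0 (2 * u) (2 * v) * Theta2 τ₁ τ₂ τ₁₂ 0 1 1 0 0 0 :=
  two_term_relation_10_general τ₁ τ₂ τ₁₂ hτ₁ hτ a c u v
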